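/- Let A be an m×n real matrix admitting a rank-revealing LU factorization A = Pᵀ L U Qᵀ, where P is an m×m permutation matrix, Q is an n×n permutation matrix, L is an invertible m×m matrix, and U is the m×n block matrix U = [[U₁, U₂], [0, 0]] with U₁ an invertible r×r matrix and U₂ an r×(n−r) matrix. Then the columns of Z = Q · [[−U₁⁻¹ U₂], [I_{n−r}]] form a basis of the null space of A: every x ∈ ℝⁿ with A x = 0 can be written as x = Z y for a unique y ∈ ℝ^{n−r}. -/

import Mathlib

/-!
Since `Pᵀ L` is invertible, `A x = 0` exactly when `U z = 0` for `z = Qᵀ x`. Splitting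
`z = (z₁, z₂)`, this reads `U₁ z₁ + U₂ z₂ = 0`, i.e. `z₁ = -U₁⁻¹ U₂ z₂`, so `z₂` is the unique
`y` with `z = [[-U₁⁻¹U₂], [I]] y`.
-/

open Matrix

namespace Matrix

variable {m n o R : Type*} [CommRing R]

lemma mulVec_eq_zero_iff_of_isUnit_det [Fintype m] [DecidableEq m] {M : Matrix m m R}
    (hM : IsUnit M.det) {v : m → R} : M *ᵥ v = 0 ↔ v = 0 :=
  (mulVec_injective_of_isUnit ((isUnit_iff_isUnit_det M).2 hM)).eq_iff' (mulVec_zero M)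

lemma fromBlocks_zero_zero_mulVec_eq_zero_iff [Fintype m] [Fintype n] [DecidableEq m]
    {U₁ : Matrix m m R} (hU₁ : IsUnit U₁.det) (U₂ : Matrix m n R) (z : m ⊕ n → R) :
    fromBlocks U₁ U₂ (0 : Matrix o m R) 0 *ᵥ z = 0 ↔
      z ∘ Sum.inl = -(U₁⁻¹ * U₂) *ᵥ (z ∘ Sum.inr) := by
  have hrows : fromBlocks U₁ U₂ (0 : Matrix o m R) 0 *ᵥ z = 0 ↔
      U₁ *ᵥ (z ∘ Sum.inl) + U₂ *ᵥ (z ∘ Sum.inr) = 0 := by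
    simp [fromBlocks_mulVec, funext_iff, Sum.forall]
  have hsolve : U₁ *ᵥ (-(U₁⁻¹ * U₂) *ᵥ (z ∘ Sum.inr)) = -(U₂ *ᵥ (z ∘ Sum.inr)) := by
    rw [mulVec_mulVec, Matrix.mul_neg, ← Matrix.mul_assoc, mul_nonsing_inv _ hU₁, Matrix.one_mul,
      neg_mulVec]
  rw [hrows, ← eq_neg_iff_add_eq_zero, ← hsolve,
    (mulVec_injective_of_isUnit ((isUnit_iff_isUnit_det U₁).2 hU₁)).eq_iff]

lemma existsUnique_eq_fromRows_one_mulVec_iff [Fintype n] [DecidableEq n] (M : Matrix m n R)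
    (z : m ⊕ n → R) : (∃! y, z = fromRows M 1 *ᵥ y) ↔ z ∘ Sum.inl = M *ᵥ (z ∘ Sum.inr) := by
  have hcomp (y : n → R) : z = fromRows M 1 *ᵥ y ↔ z ∘ Sum.inl = M *ᵥ y ∧ z ∘ Sum.inr = y := by
    rw [fromRows_mulVec, one_mulVec, ← Sum.elim_comp_inl_inr z, Sum.elim_eq_iff]
    simp
  simp only [hcomp]
  constructor
  · rintro ⟨y, ⟨hl, rfl⟩, -⟩
    exact hl
  · intro h
    exact ⟨z ∘ Sum.inr, ⟨h, rfl⟩, fun y hy => hy.2.symm⟩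

end Matrix

/-- The columns of `Z = Q ⬝ [[-U₁⁻¹U₂],[I]]` form a basis of the null space
of `A`: every `x` with `A x = 0` is `Z y` for a unique `y`. -/
theorem turnback_lu_nullspace_basis
    {r m' n' : ℕ}
    (A : Matrix (Fin r ⊕ Fin m') (Fin r ⊕ Fin n') ℝ)
    (P : Equiv.Perm (Fin r ⊕ Fin m')) (Q : Equiv.Perm (Fin r ⊕ Fin n'))
    (L : Matrix (Fin r ⊕ Fin m') (Fin r ⊕ Fin m') ℝ) (hL : IsUnit L.det)
    (U₁ : Matrix (Fin r) (Fin r) ℝ) (hU₁ : IsUnit U₁.det)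
    (U₂ : Matrix (Fin r) (Fin n') ℝ)
    (hA : A = (P.permMatrix ℝ)ᵀ * L * fromBlocks U₁ U₂ (0 : Matrix (Fin m') (Fin r) ℝ) 0 * (Q.permMatrix ℝ)ᵀ) :
    ∀ x : Fin r ⊕ Fin n' → ℝ, A.mulVec x = 0 →
      ∃! y : Fin n' → ℝ,
        x = (Q.permMatrix ℝ *
              fromRows (-(U₁⁻¹ * U₂)) (1 : Matrix (Fin n') (Fin n') ℝ)).mulVec y := by
  intro x hx
  have hPL : IsUnit ((P.permMatrix ℝ)ᵀ * L).det := by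
    rw [det_mul, det_transpose, det_permutation]
    exact ((Equiv.Perm.sign P).isUnit.map (Int.castRingHom ℝ)).mul hL
  have hB : fromBlocks U₁ U₂ (0 : Matrix (Fin m') (Fin r) ℝ) 0 *ᵥ (x ∘ Q.symm) = 0 := by
    rwa [hA, ← mulVec_mulVec, ← mulVec_mulVec, mulVec_eq_zero_iff_of_isUnit_det hPL,
      transpose_permMatrix, permMatrix_mulVec] at hx
  have hz := (existsUnique_eq_fromRows_one_mulVec_iff _ _).2
    ((fromBlocks_zero_zero_mulVec_eq_zero_iff hU₁ U₂ _).1 hB)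
  simpa only [← mulVec_mulVec, permMatrix_mulVec, Equiv.comp_symm_eq] using hz
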